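/- For any integer n ≥ 2, det[v_{|j−k|}(2,2)]_{1≤j,k≤n} = (−2)^n·F_{2n−4}, where F_m is the m-th Fibonacci number. -/

import Mathlib

def lucasU {R : Type*} [CommRing R] (x y : R) : ℕ → R
  | 0 => 0
  | 1 => 1
  | n + 2 => x * lucasU x y (n + 1) - y * lucasU x y n

def lucasV {R : Type*} [CommRing R] (x y : R) : ℕ → R
  | 0 => 2
  | 1 => x
  | n + 2 => x * lucasV x y (n + 1) - y * lucasV x y n

/-! The row operations `R_j ← R_j - x R_{j-1} + y R_{j-2}` (`j ≥ 2`) form a unitriangular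
matrix, and by the recurrence of `v_m(x, y)` they clear every entry of the Toeplitz matrix
`[v_{|j-k|}(x, y)]` lying two or more places below the diagonal. Doing the same to the columns
keeps the determinant and, by symmetry, leaves a symmetric tridiagonal matrix with diagonal
`(2, 2, 2 - 2y², 2 - 2y², …)` and off-diagonal `(x, x(y - 1), x(y - 1), …)`. Its determinant
obeys the three-term continuant recurrence, which for `x = y = 2` reads
`D_{n+2} = -6 D_{n+1} - 4 D_n` for `n ≥ 1`; so does `(-2)^n F_{2n-4}`, because
`F_{m+4} = 3 F_{m+2} - F_m`. -/

open Matrix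

section Tridiagonal

variable {R : Type*} [CommRing R]

abbrev Matrix.leadingBlock (A : Matrix ℕ ℕ R) (n : ℕ) : Matrix (Fin n) (Fin n) R :=
  A.submatrix Fin.val Fin.val

def symmTridiagonal (d c : ℕ → R) : Matrix ℕ ℕ R :=
  of fun i j => if i = j then d i else if i + 1 = j then c i else if j + 1 = i then c j else 0

def continuant (d c : ℕ → R) : ℕ → R
  | 0 => 1
  | 1 => d 0
  | n + 2 => d (n + 1) * continuant d c (n + 1) - c n ^ 2 * continuant d c n

variable (d c : ℕ → R)

lemma symmTridiagonal_isSymm : (symmTridiagonal d c).IsSymm := by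
  ext i j
  simp only [transpose_apply, symmTridiagonal, of_apply]
  split_ifs <;> first | rfl | omega | subst_vars; rfl

@[simp] lemma symmTridiagonal_apply_self (i : ℕ) : symmTridiagonal d c i i = d i := by
  simp [symmTridiagonal]

@[simp] lemma symmTridiagonal_apply_add_one_left (i : ℕ) :
    symmTridiagonal d c (i + 1) i = c i := by
  simp only [symmTridiagonal, of_apply]
  split_ifs <;> first | rfl | omega

@[simp] lemma symmTridiagonal_apply_add_one_right (i : ℕ) :
    symmTridiagonal d c i (i + 1) = c i := by
  simp only [symmTridiagonal, of_apply]
  split_ifs <;> first | rfl | omega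

lemma symmTridiagonal_apply_eq_zero {i j : ℕ} (h : j + 2 ≤ i ∨ i + 2 ≤ j) :
    symmTridiagonal d c i j = 0 := by
  simp only [symmTridiagonal, of_apply]
  split_ifs <;> first | rfl | omega

lemma det_leadingBlock_submatrix_succAbove (n : ℕ) :
    (((symmTridiagonal d c).leadingBlock (n + 2)).submatrix
        Fin.castSucc (Fin.castSucc (Fin.last n)).succAbove).det =
      c n * ((symmTridiagonal d c).leadingBlock n).det := by
  rw [det_succ_column _ (Fin.last n), Fin.sum_univ_castSucc, Finset.sum_eq_zero, zero_add,
    Fin.succAbove_last]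
  · have hsub : (((symmTridiagonal d c).leadingBlock (n + 2)).submatrix Fin.castSucc
          (Fin.castSucc (Fin.last n)).succAbove).submatrix Fin.castSucc Fin.castSucc =
          (symmTridiagonal d c).leadingBlock n := by
      ext i j
      simp [Fin.succAbove_castSucc_of_lt, Fin.lt_def]
    rw [hsub]
    simp [Even.neg_one_pow ⟨n, rfl⟩]
  · intro i _
    simp [symmTridiagonal_apply_eq_zero d c (i := i) (j := n + 1) (by omega)]

theorem det_symmTridiagonal :
    ∀ n, ((symmTridiagonal d c).leadingBlock n).det = continuant d c n
  | 0 => by simp [continuant]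
  | 1 => by simp [continuant]
  | n + 2 => by
    rw [det_succ_row _ (Fin.last _), Fin.sum_univ_castSucc, Fin.sum_univ_castSucc,
      Finset.sum_eq_zero, Fin.succAbove_last, det_leadingBlock_submatrix_succAbove, continuant,
      ← det_symmTridiagonal n, ← det_symmTridiagonal (n + 1)]
    · have hsub : ((symmTridiagonal d c).leadingBlock (n + 2)).submatrix Fin.castSucc
          Fin.castSucc = (symmTridiagonal d c).leadingBlock (n + 1) := rfl
      have hodd : (-1 : R) ^ (n + 1 + n) = -1 := Odd.neg_one_pow ⟨n, by ring⟩
      have heven : (-1 : R) ^ (n + 1 + (n + 1)) = 1 := Even.neg_one_pow ⟨n + 1, rfl⟩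
      rw [hsub]
      simp only [Fin.val_last, Fin.val_castSucc, submatrix_apply, hodd, heven,
        symmTridiagonal_apply_self, symmTridiagonal_apply_add_one_left]
      ring
    · intro j _
      simp [symmTridiagonal_apply_eq_zero d c (i := n + 1) (j := j) (by omega)]

end Tridiagonal

section RowOperation

variable {R : Type*} [CommRing R] (x y : R)

def rowOp (A : Matrix ℕ ℕ R) : Matrix ℕ ℕ R :=
  of fun j k => if 2 ≤ j then A j k - x * A (j - 1) k + y * A (j - 2) k else A j k

def colOp (A : Matrix ℕ ℕ R) : Matrix ℕ ℕ R := (rowOp x y Aᵀ)ᵀ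

lemma leadingBlock_rowOp_one_mul (A : Matrix ℕ ℕ R) (n : ℕ) :
    (rowOp x y 1).leadingBlock n * A.leadingBlock n = (rowOp x y A).leadingBlock n := by
  ext j k
  simp only [mul_apply, submatrix_apply]
  rw [Fin.sum_univ_eq_sum_range (fun a => rowOp x y 1 j a * A a k)]
  simp only [rowOp, of_apply, one_apply]
  split_ifs with hj
  · simp [sub_mul, add_mul, Finset.sum_add_distrib, Finset.sum_sub_distrib,
      show (j : ℕ) - 1 < n by omega, show (j : ℕ) - 2 < n by omega]
  · simp

lemma det_leadingBlock_rowOp_one (n : ℕ) : ((rowOp x y 1).leadingBlock n).det = 1 := by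
  rw [det_of_isLowerTriangular]
  · refine Finset.prod_eq_one fun i _ => ?_
    simp only [rowOp, submatrix_apply, of_apply]
    split_ifs
    · simp [one_apply_ne (show (i : ℕ) - 1 ≠ i by omega),
        one_apply_ne (show (i : ℕ) - 2 ≠ i by omega)]
    · simp
  · intro i j (hij : (i : ℕ) < j)
    simp [rowOp, one_apply_ne (show (i : ℕ) ≠ j by omega),
      one_apply_ne (show (i : ℕ) - 1 ≠ j by omega),
      one_apply_ne (show (i : ℕ) - 2 ≠ j by omega)]

lemma colOp_rowOp_comm (A : Matrix ℕ ℕ R) :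
    colOp x y (rowOp x y A) = rowOp x y (colOp x y A) := by
  ext j k
  simp only [colOp, rowOp, transpose_apply, of_apply]
  split_ifs <;> ring

lemma leadingBlock_rowOp_one_conj (A : Matrix ℕ ℕ R) (n : ℕ) :
    (rowOp x y 1).leadingBlock n * A.leadingBlock n * ((rowOp x y 1).leadingBlock n)ᵀ =
      (colOp x y (rowOp x y A)).leadingBlock n := by
  rw [← transpose_transpose (_ * _ * _), transpose_mul, transpose_transpose,
    leadingBlock_rowOp_one_mul, transpose_submatrix, leadingBlock_rowOp_one_mul,
    transpose_submatrix]
  rfl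

lemma isSymm_colOp_rowOp {A : Matrix ℕ ℕ R} (hA : A.IsSymm) :
    (colOp x y (rowOp x y A)).IsSymm := by
  have hrow : (rowOp x y A)ᵀ = colOp x y A := by rw [colOp, hA.eq]
  unfold IsSymm
  conv_lhs => rw [colOp, transpose_transpose, hrow, ← colOp_rowOp_comm]

end RowOperation

section LucasToeplitz

variable {R : Type*} [CommRing R] (x y : R)

def lucasToeplitz : Matrix ℕ ℕ R := of fun j k => lucasV x y ((j : ℤ) - k).natAbs

lemma lucasToeplitz_isSymm : (lucasToeplitz x y).IsSymm := by
  ext j k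
  simp only [transpose_apply, lucasToeplitz, of_apply]
  rw [← Int.natAbs_neg, neg_sub]

lemma lucasToeplitz_apply_of_le {j k : ℕ} (h : k ≤ j) :
    lucasToeplitz x y j k = lucasV x y (j - k) := by
  simp only [lucasToeplitz, of_apply]
  congr
  omega

lemma lucasToeplitz_apply_of_ge {j k : ℕ} (h : j ≤ k) :
    lucasToeplitz x y j k = lucasV x y (k - j) := by
  rw [← (lucasToeplitz_isSymm x y).apply, lucasToeplitz_apply_of_le x y h]

lemma rowOp_lucasToeplitz_apply_of_add_two_le {j k : ℕ} (h : k + 2 ≤ j) :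
    rowOp x y (lucasToeplitz x y) j k = 0 := by
  obtain ⟨m, rfl⟩ : ∃ m, j = k + (m + 2) := ⟨j - k - 2, by omega⟩
  rw [rowOp, of_apply, if_pos (by omega), lucasToeplitz_apply_of_le x y (by omega),
    lucasToeplitz_apply_of_le x y (by omega), lucasToeplitz_apply_of_le x y (by omega),
    show k + (m + 2) - k = m + 2 by omega, show k + (m + 2) - 1 - k = m + 1 by omega,
    show k + (m + 2) - 2 - k = m by omega, lucasV]
  ring

theorem colOp_rowOp_lucasToeplitz :
    colOp x y (rowOp x y (lucasToeplitz x y)) =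
      symmTridiagonal (fun i => if i < 2 then 2 else 2 - 2 * y ^ 2)
        (fun i => if i = 0 then x else x * (y - 1)) := by
  ext j k
  wlog hkj : k ≤ j generalizing j k
  · rw [← (isSymm_colOp_rowOp x y (lucasToeplitz_isSymm x y)).apply,
      ← (symmTridiagonal_isSymm _ _).apply]
    exact this k j (by omega)
  obtain h | rfl | rfl : k + 2 ≤ j ∨ j = k + 1 ∨ k = j := by omega
  · rw [colOp, transpose_apply, rowOp, of_apply, symmTridiagonal_apply_eq_zero _ _ (Or.inl h)]
    simp (disch := omega) [rowOp_lucasToeplitz_apply_of_add_two_le]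
  all_goals
    obtain rfl | rfl | ⟨i, rfl⟩ : k = 0 ∨ k = 1 ∨ ∃ i, k = i + 2 := by
      rcases k with _ | _ | i <;> simp
    all_goals simp (disch := omega) [colOp, rowOp, lucasToeplitz_apply_of_le,
      lucasToeplitz_apply_of_ge, lucasV, add_assoc, add_tsub_cancel_left] <;> ring

theorem det_leadingBlock_lucasToeplitz (n : ℕ) :
    ((lucasToeplitz x y).leadingBlock n).det =
      continuant (fun i => if i < 2 then 2 else 2 - 2 * y ^ 2)
        (fun i => if i = 0 then x else x * (y - 1)) n := by
  rw [← det_symmTridiagonal, ← colOp_rowOp_lucasToeplitz, ← leadingBlock_rowOp_one_conj,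
    det_mul, det_mul, det_transpose, det_leadingBlock_rowOp_one, one_mul, mul_one]

end LucasToeplitz

lemma fib_add_four_add_fib (m : ℕ) : Nat.fib (m + 4) + Nat.fib m = 3 * Nat.fib (m + 2) := by
  simp only [Nat.fib_add_two]
  ring

lemma continuant_lucasToeplitz_two_two : ∀ n : ℕ,
    continuant (fun i => if i < 2 then (2 : ℤ) else 2 - 2 * 2 ^ 2)
      (fun i => if i = 0 then 2 else 2 * (2 - 1)) (n + 2) = (-2) ^ (n + 2) * Nat.fib (2 * n)
  | 0 => by simp [continuant]
  | 1 => by simp [continuant]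
  | n + 2 => by
    have hfib : (Nat.fib (2 * n + 4) + Nat.fib (2 * n) : ℤ) = 3 * Nat.fib (2 * n + 2) := by
      exact_mod_cast fib_add_four_add_fib (2 * n)
    rw [continuant, continuant_lucasToeplitz_two_two (n + 1), continuant_lucasToeplitz_two_two n,
      show 2 * (n + 2) = 2 * n + 4 by ring, show 2 * (n + 1) = 2 * n + 2 by ring,
      if_neg (by omega), if_neg (by omega)]
    linear_combination (-(-2) ^ (n + 4) : ℤ) * hfib

theorem stmt_10 (n : ℕ) (hn : 2 ≤ n) :
    Matrix.det (Matrix.of fun j k : Fin n =>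
        lucasV (2 : ℤ) 2 ((j : ℤ) - (k : ℤ)).natAbs) =
      (-2) ^ n * (Nat.fib (2 * n - 4) : ℤ) := by
  obtain ⟨m, rfl⟩ : ∃ m, n = m + 2 := ⟨n - 2, by omega⟩
  rw [show 2 * (m + 2) - 4 = 2 * m by omega, ← continuant_lucasToeplitz_two_two]
  exact det_leadingBlock_lucasToeplitz 2 2 (m + 2)
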